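/- Consequently, the quotient of S² × S¹ × [0,1] by the relation identifying (x, z, ε) ∼ (x, z', ε) for ε ∈ {0,1}, all x ∈ S², and all z, z' ∈ S¹ is homeomorphic to S² × S². -/

import Mathlib

/-- The n-sphere, as the unit sphere in Euclidean (n+1)-space. -/
abbrev Sph (n : ℕ) : Type := Metric.sphere (0 : EuclideanSpace ℝ (Fin (n+1))) 1

/-- The equivalence relation on S² × S¹ × [0,1] collapsing, for each x ∈ S², each of
the circles {x} × S¹ × {0} and {x} × S¹ × {1} to a point. -/
def fibSuspSetoid : Setoid (Sph 2 × Sph 1 × unitInterval) where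
  r p q := p = q ∨ (p.1 = q.1 ∧ p.2.2 = 0 ∧ q.2.2 = 0) ∨ (p.1 = q.1 ∧ p.2.2 = 1 ∧ q.2.2 = 1)
  iseqv := by
    constructor
    · intro p; left; rfl
    · rintro p q (rfl | ⟨h0, h1, h2⟩ | ⟨h0, h1, h2⟩) <;> tauto
    · rintro p q r (rfl | ⟨h0, h1, h2⟩ | ⟨h0, h1, h2⟩)
        (h | ⟨h3, h4, h5⟩ | ⟨h3, h4, h5⟩) <;> simp_all

/-- The fiberwise unreduced suspension of the S¹ factor of S² × S¹. -/
def FibSusp : Type := Quotient fibSuspSetoid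

noncomputable instance : TopologicalSpace FibSusp := instTopologicalSpaceQuotient

/-!
The map `(z, t) ↦ (sin (π t) • z, cos (π t))` from `Sⁿ × [0,1]` onto `Sⁿ⁺¹` is a
continuous surjection that is injective away from `t ∈ {0, 1}` and collapses each of
`Sⁿ × {0}` and `Sⁿ × {1}` to a pole. Its product with the identity of `S²` is thus a
continuous surjection from the compact space `S² × S¹ × [0,1]` onto the Hausdorff space
`S² × S²` whose fibres are exactly the classes of the relation, hence a quotient map, and it
descends to a homeomorphism.
-/

open Real Function Metric Topology unitInterval

theorem Topology.IsQuotientMap.nonempty_quotient_homeomorph {X Y : Type*} [TopologicalSpace X]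
    [TopologicalSpace Y] {f : X → Y} (hf : IsQuotientMap f) {s : Setoid X}
    (hs : ∀ a b, s a b ↔ f a = f b) : Nonempty (Quotient s ≃ₜ Y) := by
  obtain rfl : s = Setoid.ker f := Setoid.ext hs
  exact ⟨IsQuotientMap.homeomorph (f := ⟨f, hf.continuous⟩) hf⟩

theorem exists_mem_sphere_norm_smul_eq {E : Type*} [NormedAddCommGroup E] [NormedSpace ℝ E]
    [Nontrivial E] (v : E) : ∃ z ∈ sphere (0 : E) 1, ‖v‖ • z = v := by
  rcases eq_or_ne v 0 with rfl | hv
  · obtain ⟨z, hz⟩ := (NormedSpace.sphere_nonempty (x := (0 : E))).2 zero_le_one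
    exact ⟨z, hz, by simp⟩
  · exact ⟨‖v‖⁻¹ • v, by simp [norm_smul, hv], by simp [smul_smul, hv]⟩

theorem EuclideanSpace.norm_toLp_snoc_sq {m : ℕ} (v : EuclideanSpace ℝ (Fin m)) (c : ℝ) :
    ‖WithLp.toLp 2 (Fin.snoc (α := fun _ => ℝ) v.ofLp c)‖ ^ 2 = ‖v‖ ^ 2 + c ^ 2 := by
  simp [EuclideanSpace.real_norm_sq_eq, Fin.sum_univ_castSucc]

theorem unitInterval.injective_cos_pi_mul : Injective fun t : I => cos (π * t) := by
  have hmem (t : I) : π * (t : ℝ) ∈ Set.Icc 0 π :=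
    ⟨mul_nonneg pi_pos.le t.2.1, mul_le_of_le_one_right pi_pos.le t.2.2⟩
  intro s t h
  exact Subtype.ext (mul_left_cancel₀ pi_ne_zero (injOn_cos (hmem s) (hmem t) h))

theorem unitInterval.sin_pi_mul_pos {t : I} (h0 : t ≠ 0) (h1 : t ≠ 1) : 0 < sin (π * t) := by
  have ht0 : (0 : ℝ) < t := coe_pos.2 (unitInterval.pos_iff_ne_zero.2 h0)
  have ht1 : (t : ℝ) < 1 := coe_lt_one.2 (unitInterval.lt_one_iff_ne_one.2 h1)
  exact sin_pos_of_pos_of_lt_pi (by positivity) (mul_lt_of_lt_one_right pi_pos ht1)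

noncomputable def sphSuspension (n : ℕ) (p : Sph n × I) : Sph (n + 1) :=
  ⟨WithLp.toLp 2 (Fin.snoc (α := fun _ => ℝ)
      (sin (π * p.2) • (p.1 : EuclideanSpace ℝ (Fin (n + 1)))).ofLp (cos (π * p.2))), by
    rw [mem_sphere_zero_iff_norm, ← pow_eq_one_iff_of_nonneg (norm_nonneg _) two_ne_zero,
      EuclideanSpace.norm_toLp_snoc_sq, norm_smul]
    simp⟩

theorem continuous_sphSuspension (n : ℕ) : Continuous (sphSuspension n) := by
  unfold sphSuspension
  fun_prop

theorem sphSuspension_eq_iff {n : ℕ} {p q : Sph n × I} :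
    sphSuspension n p = sphSuspension n q ↔
      p = q ∨ (p.2 = 0 ∧ q.2 = 0) ∨ (p.2 = 1 ∧ q.2 = 1) := by
  obtain ⟨z, t⟩ := p
  obtain ⟨z', t'⟩ := q
  constructor
  · intro h
    rw [sphSuspension, sphSuspension, Subtype.mk.injEq, (WithLp.toLp_injective 2).eq_iff,
      Fin.snoc_inj, (WithLp.ofLp_injective 2).eq_iff] at h
    obtain ⟨hsmul, hcos⟩ := h
    obtain rfl : t = t' := injective_cos_pi_mul hcos
    by_cases h0 : t = 0
    · simp [h0]
    by_cases h1 : t = 1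
    · simp [h1]
    have hz : z = z' := Subtype.ext (smul_right_injective _ (sin_pi_mul_pos h0 h1).ne' hsmul)
    simp [hz]
  · rintro (h | ⟨h0, h0'⟩ | ⟨h1, h1'⟩)
    · rw [h]
    all_goals simp_all [sphSuspension]

theorem sphSuspension_surjective (n : ℕ) : Surjective (sphSuspension n) := by
  intro w
  set v : EuclideanSpace ℝ (Fin (n + 1)) := WithLp.toLp 2 (Fin.init w.1.ofLp)
  set c := w.1 (Fin.last _)
  have hvc : ‖v‖ ^ 2 + c ^ 2 = 1 := by
    rw [← EuclideanSpace.norm_toLp_snoc_sq]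
    simp [v, c, Fin.snoc_init_self]
  obtain ⟨z, hz, hzv⟩ := exists_mem_sphere_norm_smul_eq v
  have hc : c ∈ Set.Icc (-1 : ℝ) 1 := by
    have : c ^ 2 ≤ 1 := by nlinarith [sq_nonneg ‖v‖]
    exact abs_le.1 ((sq_le_one_iff_abs_le_one c).1 this)
  let t : I := ⟨arccos c / π, div_nonneg (arccos_nonneg c) pi_pos.le,
    (div_le_one pi_pos).2 (arccos_le_pi c)⟩
  have hπt : π * (t : ℝ) = arccos c := mul_div_cancel₀ _ pi_ne_zero
  have hcos : cos (π * t) = c := by rw [hπt, cos_arccos hc.1 hc.2]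
  have hsin : sin (π * t) = ‖v‖ := by
    rw [hπt, sin_arccos, show 1 - c ^ 2 = ‖v‖ ^ 2 by linarith, sqrt_sq (norm_nonneg _)]
  refine ⟨(⟨z, hz⟩, t), Subtype.ext ?_⟩
  simp only [sphSuspension, hcos, hsin, hzv, v, c]
  rw [Fin.snoc_init_self]

theorem fibSuspSetoid_iff (p q : Sph 2 × Sph 1 × I) :
    fibSuspSetoid p q ↔ Prod.map id (sphSuspension 1) p = Prod.map id (sphSuspension 1) q := by
  rw [Prod.map_apply, Prod.map_apply, Prod.ext_iff, sphSuspension_eq_iff]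
  obtain ⟨x, z, t⟩ := p
  obtain ⟨x', z', t'⟩ := q
  change _ ∨ _ ∨ _ ↔ _
  simp only [Prod.mk.injEq, id]
  tauto

/-- S² × (S¹ × [0,1] / ∼), collapsed fiberwise, is homeomorphic to S² × S². -/
theorem fiberwise_suspension_homeomorph_S2xS2 : Nonempty (FibSusp ≃ₜ Sph 2 × Sph 2) := by
  have hcont : Continuous (Prod.map id (sphSuspension 1) : Sph 2 × Sph 1 × I → _) :=
    continuous_id.prodMap (continuous_sphSuspension 1)
  have hsurj := (surjective_id (α := Sph 2)).prodMap (sphSuspension_surjective 1)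
  exact (hcont.isClosedMap.isQuotientMap hcont hsurj).nonempty_quotient_homeomorph
    fibSuspSetoid_iff
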